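/- Under the axioms below, for any nonzero objects M₁, M₂ of C one has μ_max(M₁ ⊗ M₂) ≤ ( μ_max(M₁) + ρ(M₁) ) + ( μ_max(M₂) + ρ(M₂) ). -/

import Mathlib

/-!
Let `N` be a nonzero subobject of `M₁ ⊗ M₂`. Since `μ(N) ≤ ν(N) + ρ(N)` and
`ρ(N) ≤ ρ(M₁) + ρ(M₂)`, it suffices to show `μ(L) ≤ μ_max(M₁) + μ_max(M₂)` for every invertible
subobject `L` of `M₁ ⊗ M₂`. Twisting by `L⁻¹` turns `L ↪ M₁ ⊗ M₂` into a nonzero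
`𝟙 ⟶ (L⁻¹ ⊗ M₁) ⊗ M₂`, and `u` into a nonzero `M₂^∨ ⟶ L⁻¹ ⊗ M₁`, whose transpose is a nonzero
`k : W ⟶ M₂` with `W^∨ ≅ L⁻¹ ⊗ M₁`. Then `Im k` is a subobject of `M₂`, the dual `D` of `Coim k` is
a subobject of `L⁻¹ ⊗ M₁`, so `L ⊗ D` is one of `M₁`, and
`μ(L) = μ(L ⊗ D) + μ(Coim k) ≤ μ(L ⊗ D) + μ(Im k) ≤ μ_max(M₁) + μ_max(M₂)`.
-/

open CategoryTheory CategoryTheory.Limits MonoidalCategory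

noncomputable section

universe v u

variable {C : Type u} [Category.{v} C]

/-- The coimage of a morphism in a category with kernels and cokernels:
the cokernel of its kernel. -/
def Coim [HasZeroMorphisms C] [HasKernels C] [HasCokernels C] {X Y : C} (f : X ⟶ Y) : C :=
  cokernel (kernel.ι f)

/-- The image of a morphism in a category with kernels and cokernels:
the kernel of its cokernel. -/
def Im [HasZeroMorphisms C] [HasKernels C] [HasCokernels C] {X Y : C} (f : X ⟶ Y) : C :=
  kernel (cokernel.π f)

/-- `μ_max(M) ∈ ℝ ∪ {±∞}`: the supremum of `μ(N)` over the nonzero subobjects `N` of `M`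
(taken in the extended reals; it is `> -∞` as soon as `M` is nonzero, and it may be `+∞`). -/
def muMaxE (μ : C → ℝ) (M : C) : EReal :=
  sSup { x : EReal | ∃ (N : C) (f : N ⟶ M), Mono f ∧ ¬ IsZero N ∧ x = (μ N : EReal) }

/-- An object `L` of a monoidal category is invertible if it admits a two-sided
`⊗`-inverse. -/
def IsInvertibleObj [MonoidalCategory C] (L : C) : Prop :=
  ∃ L' : C, Nonempty (L ⊗ L' ≅ 𝟙_ C) ∧ Nonempty (L' ⊗ L ≅ 𝟙_ C)

/-- `ν(M) ∈ ℝ ∪ {±∞}`: the supremum of `μ(L)` over the nonzero invertible subobjects `L`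
of `M` (it is `-∞` if there is no such subobject). -/
def nuE [MonoidalCategory C] (μ : C → ℝ) (M : C) : EReal :=
  sSup { x : EReal | ∃ (L : C) (f : L ⟶ M), Mono f ∧ ¬ IsZero L ∧ IsInvertibleObj L ∧
    x = (μ L : EReal) }

end

open CategoryTheory CategoryTheory.Limits MonoidalCategory

namespace CategoryTheory

variable {C : Type*} [Category C]

lemma coe_le_muMaxE (μ : C → ℝ) {N M : C} (f : N ⟶ M) [Mono f] (hN : ¬ IsZero N) :
    (μ N : EReal) ≤ muMaxE μ M :=
  le_sSup ⟨N, f, inferInstance, hN, rfl⟩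

section Factorization

variable [HasZeroMorphisms C] [HasKernels C] [HasCokernels C]

noncomputable def Coim.π {X Y : C} (f : X ⟶ Y) : X ⟶ Coim f := cokernel.π (kernel.ι f)

instance {X Y : C} (f : X ⟶ Y) : Epi (Coim.π f) := inferInstanceAs (Epi (cokernel.π _))

noncomputable def Im.ι {X Y : C} (f : X ⟶ Y) : Im f ⟶ Y := kernel.ι (cokernel.π f)

instance {X Y : C} (f : X ⟶ Y) : Mono (Im.ι f) := inferInstanceAs (Mono (kernel.ι _))

lemma not_isZero_Im {X Y : C} {f : X ⟶ Y} (hf : f ≠ 0) : ¬ IsZero (Im f) := fun h => hf <| by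
  have : kernel.lift (cokernel.π f) f (cokernel.condition f) = 0 := h.eq_zero_of_tgt _
  rw [← kernel.lift_ι (cokernel.π f) f (cokernel.condition f), this, zero_comp]

lemma not_isZero_Coim {X Y : C} {f : X ⟶ Y} (hf : f ≠ 0) : ¬ IsZero (Coim f) := fun h => hf <| by
  have : cokernel.desc (kernel.ι f) f (kernel.condition f) = 0 := h.eq_zero_of_src _
  rw [← cokernel.π_desc (kernel.ι f) f (kernel.condition f), this, comp_zero]

lemma exists_dual_subobject_of_ne_zero (μ : C → ℝ)
    (hμ : ∀ {X Y : C} (f : X ⟶ Y), f ≠ 0 → μ (Coim f) ≤ μ (Im f))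
    (e : C ≌ Cᵒᵖ) (hμdual : ∀ M : C, ¬ IsZero M → μ ((e.functor.obj M).unop) = -μ M)
    {W M : C} (k : W ⟶ M) (hk : k ≠ 0) :
    ∃ (D : C) (d : D ⟶ (e.functor.obj W).unop), Mono d ∧ ¬ IsZero D ∧
      ((-μ D : ℝ) : EReal) ≤ muMaxE μ M := by
  have hCoim := not_isZero_Coim hk
  refine ⟨(e.functor.obj (Coim k)).unop, (e.functor.map (Coim.π k)).unop,
    inferInstance, fun h => hCoim (IsZero.of_full_of_faithful_of_isZero e.functor _ h.op), ?_⟩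
  rw [hμdual _ hCoim, neg_neg]
  exact (EReal.coe_le_coe_iff.2 (hμ k hk)).trans
    (coe_le_muMaxE μ (Im.ι k) (not_isZero_Im hk))

lemma exists_subobject_of_dual_hom_ne_zero (μ : C → ℝ)
    (hμ : ∀ {X Y : C} (f : X ⟶ Y), f ≠ 0 → μ (Coim f) ≤ μ (Im f))
    (e : C ≌ Cᵒᵖ) (hμdual : ∀ M : C, ¬ IsZero M → μ ((e.functor.obj M).unop) = -μ M)
    {M X : C} (h : (e.functor.obj M).unop ⟶ X) (hh : h ≠ 0) :
    ∃ (D : C) (d : D ⟶ X), Mono d ∧ ¬ IsZero D ∧ ((-μ D : ℝ) : EReal) ≤ muMaxE μ M := by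
  -- `μ` need not be invariant under isomorphism, so the coimage has to be dualized by
  -- `e.functor` itself: hence the detour through the transpose of `h`.
  have hk : e.inverse.map h.op ≫ (e.unitIso.app M).inv ≠ 0 := by
    intro hk
    have : e.inverse.map h.op = 0 := by simpa using congrArg (· ≫ (e.unitIso.app M).hom) hk
    exact hh (Quiver.Hom.op_inj (e.inverse.map_eq_zero_iff.1 this))
  obtain ⟨D, d, hd, hD, hμD⟩ := exists_dual_subobject_of_ne_zero μ hμ e hμdual _ hk
  exact ⟨D, d ≫ (e.counitIso.app (Opposite.op X)).unop.inv, mono_comp _ _, hD, hμD⟩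

end Factorization

section Monoidal

variable [MonoidalCategory C]

def tensorLeftEquiv {L L' : C} (e₁ : L ⊗ L' ≅ 𝟙_ C) (e₂ : L' ⊗ L ≅ 𝟙_ C) : C ≌ C :=
  Equivalence.mk (tensorLeft L') (tensorLeft L)
    ((leftUnitorNatIso C).symm ≪≫ (curriedTensor C).mapIso e₁.symm ≪≫ tensorLeftTensor L L')
    ((tensorLeftTensor L' L).symm ≪≫ (curriedTensor C).mapIso e₂ ≪≫ leftUnitorNatIso C)

variable [HasZeroMorphisms C] [HasKernels C] [HasCokernels C]

lemma coe_le_muMaxE_add_muMaxE_of_isInvertibleObj (μ : C → ℝ)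
    (hμ : ∀ {X Y : C} (f : X ⟶ Y), f ≠ 0 → μ (Coim f) ≤ μ (Im f))
    (hμtens : ∀ M₁ M₂ : C, ¬ IsZero M₁ → ¬ IsZero M₂ →
      ¬ IsZero (M₁ ⊗ M₂) ∧ μ (M₁ ⊗ M₂) = μ M₁ + μ M₂)
    (e : C ≌ Cᵒᵖ) (hμdual : ∀ M : C, ¬ IsZero M → μ ((e.functor.obj M).unop) = -μ M)
    (u : ∀ M₁ M₂ : C, (𝟙_ C ⟶ M₁ ⊗ M₂) → ((e.functor.obj M₂).unop ⟶ M₁))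
    (hu : ∀ (M₁ M₂ : C) (f : 𝟙_ C ⟶ M₁ ⊗ M₂), f ≠ 0 → u M₁ M₂ f ≠ 0)
    {L M₁ M₂ : C} (hL : IsInvertibleObj L) (hL0 : ¬ IsZero L) (f : L ⟶ M₁ ⊗ M₂) [Mono f] :
    (μ L : EReal) ≤ muMaxE μ M₁ + muMaxE μ M₂ := by
  obtain ⟨L', ⟨e₁⟩, ⟨e₂⟩⟩ := hL
  let E := tensorLeftEquiv e₁ e₂
  have hg : e₂.inv ≫ L' ◁ f ≫ (α_ L' M₁ M₂).inv ≠ 0 := fun hg =>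
    have : L' ◁ f = 0 := by simpa using e₂.hom ≫= hg =≫ (α_ L' M₁ M₂).hom
    hL0 (IsZero.of_mono_eq_zero f (E.functor.map_eq_zero_iff.1 this))
  obtain ⟨D, d, hd, hD, hμD⟩ :=
    exists_subobject_of_dual_hom_ne_zero μ hμ e hμdual (u _ _ _) (hu _ _ _ hg)
  obtain ⟨hLD, hμLD⟩ := hμtens L D hL0 hD
  have : Mono (L ◁ d) := E.inverse.map_mono d
  have hμLD_le : (μ (L ⊗ D) : EReal) ≤ muMaxE μ M₁ :=
    coe_le_muMaxE μ (L ◁ d ≫ ((α_ L L' M₁).symm ≪≫ whiskerRightIso e₁ M₁ ≪≫ λ_ M₁).hom) hLD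
  calc (μ L : EReal) = ((μ (L ⊗ D) + -μ D : ℝ) : EReal) := by rw [hμLD]; ring_nf
    _ = (μ (L ⊗ D) : EReal) + ((-μ D : ℝ) : EReal) := EReal.coe_add _ _
    _ ≤ muMaxE μ M₁ + muMaxE μ M₂ := add_le_add hμLD_le hμD

lemma nuE_le_muMaxE_add_muMaxE (μ : C → ℝ)
    (hμ : ∀ {X Y : C} (f : X ⟶ Y), f ≠ 0 → μ (Coim f) ≤ μ (Im f))
    (hμtens : ∀ M₁ M₂ : C, ¬ IsZero M₁ → ¬ IsZero M₂ →
      ¬ IsZero (M₁ ⊗ M₂) ∧ μ (M₁ ⊗ M₂) = μ M₁ + μ M₂)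
    (e : C ≌ Cᵒᵖ) (hμdual : ∀ M : C, ¬ IsZero M → μ ((e.functor.obj M).unop) = -μ M)
    (u : ∀ M₁ M₂ : C, (𝟙_ C ⟶ M₁ ⊗ M₂) → ((e.functor.obj M₂).unop ⟶ M₁))
    (hu : ∀ (M₁ M₂ : C) (f : 𝟙_ C ⟶ M₁ ⊗ M₂), f ≠ 0 → u M₁ M₂ f ≠ 0)
    {N M₁ M₂ : C} (f : N ⟶ M₁ ⊗ M₂) [Mono f] :
    nuE μ N ≤ muMaxE μ M₁ + muMaxE μ M₂ := sSup_le <| by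
  rintro _ ⟨L, g, hg, hL0, hL, rfl⟩
  exact coe_le_muMaxE_add_muMaxE_of_isInvertibleObj μ hμ hμtens e hμdual u hu hL hL0 (g ≫ f)

end Monoidal

end CategoryTheory

theorem muMax_tensor_le_of_rho_general {C : Type u} [Category.{v} C] [HasZeroMorphisms C]
    [HasKernels C] [HasCokernels C] [MonoidalCategory C]
    (μ : C → ℝ)
    (hμ : ∀ {X Y : C} (f : X ⟶ Y), f ≠ 0 → μ (Coim f) ≤ μ (Im f))
    (hμtens : ∀ M₁ M₂ : C, ¬ IsZero M₁ → ¬ IsZero M₂ →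
      ¬ IsZero (M₁ ⊗ M₂) ∧ μ (M₁ ⊗ M₂) = μ M₁ + μ M₂)
    (e : C ≌ Cᵒᵖ)
    (hμdual : ∀ M : C, ¬ IsZero M → μ ((e.functor.obj M).unop) = -μ M)
    (u : ∀ M₁ M₂ : C, (𝟙_ C ⟶ M₁ ⊗ M₂) → ((e.functor.obj M₂).unop ⟶ M₁))
    (hu : ∀ (M₁ M₂ : C) (f : 𝟙_ C ⟶ M₁ ⊗ M₂), f ≠ 0 → u M₁ M₂ f ≠ 0)
    (ρ : C → ℝ)
    (hρmono : ∀ {N M : C} (f : N ⟶ M), Mono f → ¬ IsZero N → ¬ IsZero M → ρ N ≤ ρ M)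
    (hρtens : ∀ M₁ M₂ : C, ¬ IsZero M₁ → ¬ IsZero M₂ → ρ (M₁ ⊗ M₂) = ρ M₁ + ρ M₂)
    (hμν : ∀ M : C, ¬ IsZero M → (μ M : EReal) ≤ nuE μ M + (ρ M : EReal))
    (M₁ M₂ : C) (h₁ : ¬ IsZero M₁) (h₂ : ¬ IsZero M₂) :
    muMaxE μ (M₁ ⊗ M₂) ≤
      (muMaxE μ M₁ + (ρ M₁ : EReal)) + (muMaxE μ M₂ + (ρ M₂ : EReal)) := by
  refine sSup_le ?_
  rintro _ ⟨N, f, hf, hN, rfl⟩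
  have hρ : ρ N ≤ ρ M₁ + ρ M₂ :=
    hρtens M₁ M₂ h₁ h₂ ▸ hρmono f hf hN (hμtens M₁ M₂ h₁ h₂).1
  calc (μ N : EReal) ≤ nuE μ N + (ρ N : EReal) := hμν N hN
    _ ≤ (muMaxE μ M₁ + muMaxE μ M₂) + ((ρ M₁ + ρ M₂ : ℝ) : EReal) :=
        add_le_add (nuE_le_muMaxE_add_muMaxE μ hμ hμtens e hμdual u hu f)
          (EReal.coe_le_coe_iff.2 hρ)
    _ = (muMaxE μ M₁ + (ρ M₁ : EReal)) + (muMaxE μ M₂ + (ρ M₂ : EReal)) := by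
        rw [EReal.coe_add, add_add_add_comm]

/-- In the setting of the axioms of §5 (monoidal category with zero object,
kernels and cokernels; `μ` with `μ(Coim f) ≤ μ(Im f)` for nonzero `f`, additive on tensor
products; an anti-equivalence `(-)^∨` with `μ(M^∨) = -μ(M)`; maps
`u : C(𝟙, M₁ ⊗ M₂) → C(M₂^∨, M₁)` preserving nonzeroness), let `ρ` be a further real-valued
function on nonzero objects such that `ρ(N) ≤ ρ(M)` for every nonzero subobject `N` of `M`,
`ρ(M₁ ⊗ M₂) = ρ(M₁) + ρ(M₂)`, and `μ(M) ≤ ν(M) + ρ(M)` for every nonzero `M`.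
Then for any nonzero objects `M₁`, `M₂`:
`μ_max(M₁ ⊗ M₂) ≤ (μ_max(M₁) + ρ(M₁)) + (μ_max(M₂) + ρ(M₂))`. -/
theorem muMax_tensor_le_of_rho {C : Type u} [Category.{v} C] [HasZeroMorphisms C]
    [HasZeroObject C] [HasKernels C] [HasCokernels C] [MonoidalCategory C]
    (μ : C → ℝ)
    (hμ : ∀ {X Y : C} (f : X ⟶ Y), f ≠ 0 → μ (Coim f) ≤ μ (Im f))
    (hμtens : ∀ M₁ M₂ : C, ¬ IsZero M₁ → ¬ IsZero M₂ →
      ¬ IsZero (M₁ ⊗ M₂) ∧ μ (M₁ ⊗ M₂) = μ M₁ + μ M₂)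
    (e : C ≌ Cᵒᵖ)
    (hμdual : ∀ M : C, ¬ IsZero M → μ ((e.functor.obj M).unop) = -μ M)
    (u : ∀ M₁ M₂ : C, (𝟙_ C ⟶ M₁ ⊗ M₂) → ((e.functor.obj M₂).unop ⟶ M₁))
    (hu : ∀ (M₁ M₂ : C) (f : 𝟙_ C ⟶ M₁ ⊗ M₂), f ≠ 0 → u M₁ M₂ f ≠ 0)
    (ρ : C → ℝ)
    (hρmono : ∀ {N M : C} (f : N ⟶ M), Mono f → ¬ IsZero N → ¬ IsZero M → ρ N ≤ ρ M)
    (hρtens : ∀ M₁ M₂ : C, ¬ IsZero M₁ → ¬ IsZero M₂ → ρ (M₁ ⊗ M₂) = ρ M₁ + ρ M₂)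
    (hμν : ∀ M : C, ¬ IsZero M → (μ M : EReal) ≤ nuE μ M + (ρ M : EReal))
    (M₁ M₂ : C) (h₁ : ¬ IsZero M₁) (h₂ : ¬ IsZero M₂) :
    muMaxE μ (M₁ ⊗ M₂) ≤
      (muMaxE μ M₁ + (ρ M₁ : EReal)) + (muMaxE μ M₂ + (ρ M₂ : EReal)) :=
  muMax_tensor_le_of_rho_general μ hμ hμtens e hμdual u hu ρ hρmono hρtens hμν M₁ M₂ h₁ h₂
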